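/- Let (v_n)_{n≥0} satisfy 1 = v_0 ≤ v_1 ≤ v_2 ≤ ⋯ and, with the convention v_{-1} = 0, the condition v_{n-2} v_{2p-1} + v_{2p-3} v_{n-2p} = v_n v_{2p-3} + v_{2p-1} v_{n-2p} for all n ≥ 2 and p ≥ 1 with 2p ≤ n. Fix b_0 > 0 and set b_{n-1} = b_0 √(v_{n-1}(v_n − v_{n-2})/v_1) for n ≥ 2, and let ψ_0(x) = 1, ψ_1(x) = x/b_0, and b_n ψ_{n+1}(x) = x ψ_n(x) − b_{n-1} ψ_{n-1}(x) for n ≥ 1. Let B̄₁ be the operator B̄₁ p(x) = Σ_{k≥2} ε_k x^k p^{(k)}(x), where (ε_k) is the sequence determined by v. Then the following are equivalent: (a) there exist real sequences (δ_n)_{n≥2} and (β_n)_{n≥3} such that B̄₁ ψ_2 = δ_2 x ψ_1 and B̄₁ ψ_n = δ_n x ψ_{n-1} + β_n ψ_{n-2} for all n ≥ 3; (b) v_{2p+1} = (p+1) v_1 for all p ≥ 1 and v_{2m} = m v_2 − (m−1) for all m ≥ 2. -/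

import Mathlib

/-!
`B̄₁` is diagonal on monomials: `B̄₁ xᵐ = λₘ xᵐ` with `λₘ = ∑_{k ≥ 2} ε_k m(m-1)⋯(m-k+1)`, and the
recursion defining `ε` says exactly that `λₘ = v_{m-1} - m` for `m ≥ 1`.

(a) ⇒ (b): comparing the coefficients of `x⁰, x², x⁴` in `B̄₁ ψ₄ = δ₄ x ψ₃ + β₄ ψ₂` gives
`λ₂ (b₀² + b₁² + b₂²) = λ₄ (b₀² + b₁²)`, which in terms of `v` reads `v₃ = 2 v₁`. The compatibility
condition with `p = 2` then becomes `v_{n+4} = 2 v_{n+2} - v_n`, so `v` is affine along the even and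
along the odd indices.

(b) ⇒ (a): now `λₘ` is affine in `m` on each parity class, and `b_{n+2}² = b_n² + b_1²`. Since `ψₙ`
has the parity of `n`, `B̄₁ ψₙ` is a combination of `ψₙ` and `x ψₙ'`. Differentiating the three-term
recurrence shows that `x ψₙ' - n ψₙ` satisfies the same recurrence with the source term
`2 b_{n-1} ψ_{n-1}`, and the relation on `b` is exactly what makes
`x ψ_{n+2}' - (n+2) ψ_{n+2} = (2 b_n b_{n+1} / b_1²) ψ_n`. Eliminating `ψₙ` by the recurrence gives (a).
-/

open Polynomial Finset

/-- Extension of a sequence `v : ℕ → ℝ` to integer indices by `0`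
(the convention `v_{-1} = 0`). -/
noncomputable def vext (v : ℕ → ℝ) : ℤ → ℝ := fun n => if 0 ≤ n then v n.toNat else 0

/-- The operator `B̄₁ p (x) = ∑_{k ≥ 2} ε_k x^k p^{(k)}(x)`
(a finite sum on each polynomial). -/
noncomputable def B1bar (ε : ℕ → ℝ) (p : Polynomial ℝ) : Polynomial ℝ :=
  ∑ k ∈ Finset.Icc 2 p.natDegree, C (ε k) * X ^ k * derivative^[k] p

noncomputable def B1barEigenvalue (ε : ℕ → ℝ) (m : ℕ) : ℝ :=
  ∑ k ∈ Icc 2 m, ε k * m.descFactorial k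

theorem coeff_B1bar (ε : ℕ → ℝ) (p : ℝ[X]) (m : ℕ) :
    (B1bar ε p).coeff m = B1barEigenvalue ε m * p.coeff m := by
  have hterm : ∀ k, (C (ε k) * X ^ k * derivative^[k] p).coeff m =
      if k ≤ m then ε k * m.descFactorial k * p.coeff m else 0 := by
    intro k
    rw [mul_assoc, coeff_C_mul, coeff_X_pow_mul']
    split_ifs with h
    · rw [coeff_iterate_derivative, Nat.sub_add_cancel h, nsmul_eq_mul, mul_assoc]
    · rw [mul_zero]
  rw [B1bar, finsetSum_coeff, B1barEigenvalue, sum_mul]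
  simp_rw [hterm, ← sum_filter]
  by_cases hm : m ≤ p.natDegree
  · congr 1; ext k; simp only [mem_filter, mem_Icc]; omega
  · rw [coeff_eq_zero_of_natDegree_lt (not_le.mp hm)]
    simp

theorem coeff_X_mul_derivative {R : Type*} [Semiring R] (p : R[X]) (m : ℕ) :
    (X * derivative p).coeff m = m * p.coeff m := by
  cases m with
  | zero => simp
  | succ m => rw [coeff_X_mul, coeff_derivative, ← Nat.cast_succ, Nat.cast_comm]

theorem B1bar_eq_of_eigenvalue_affine (ε : ℕ → ℝ) (p : ℝ[X]) (a c : ℝ)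
    (h : ∀ m, p.coeff m ≠ 0 → B1barEigenvalue ε m = a * m + c) :
    B1bar ε p = C a * (X * derivative p) + C c * p := by
  ext m
  rw [coeff_B1bar, coeff_add, coeff_C_mul, coeff_C_mul, coeff_X_mul_derivative]
  by_cases hm : p.coeff m = 0
  · simp [hm]
  · rw [h m hm]; ring

section Epsilon

variable {v ε : ℕ → ℝ} (hv0 : v 0 = 1) (hε1 : ε 1 = 1)
  (hεk : ∀ k : ℕ, 2 ≤ k →
    ε k = v (k - 1) / (Nat.factorial k : ℝ)
      - ∑ j ∈ Finset.Icc 1 (k - 1), ε j / (Nat.factorial (k - j) : ℝ))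
include hv0 hε1 hεk

theorem sum_eps_mul_descFactorial {m : ℕ} (hm : 1 ≤ m) :
    ∑ j ∈ Icc 1 m, ε j * m.descFactorial j = v (m - 1) := by
  obtain ⟨k, rfl⟩ := Nat.exists_eq_add_of_le' hm
  have hrec : ∑ j ∈ Icc 1 (k + 1), ε j / (k + 1 - j).factorial = v k / (k + 1).factorial := by
    rw [sum_Icc_succ_top (by omega), Nat.sub_self, Nat.factorial_zero, Nat.cast_one, div_one]
    rcases k.eq_zero_or_pos with rfl | hk
    · simp [hε1, hv0]
    · rw [hεk (k + 1) (by omega), Nat.add_sub_cancel]; ring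
  have hfac : ∀ j ∈ Icc 1 (k + 1), ((k + 1).descFactorial j : ℝ) =
      (k + 1).factorial / (k + 1 - j).factorial := by
    intro j hj
    rw [eq_div_iff (by positivity), mul_comm]
    exact_mod_cast Nat.factorial_mul_descFactorial (mem_Icc.mp hj).2
  rw [sum_congr rfl fun j hj => by rw [hfac j hj, mul_div_assoc', mul_div_right_comm],
    ← sum_mul, hrec, Nat.add_sub_cancel, div_mul_cancel₀ _ (by positivity)]

theorem B1barEigenvalue_eq {m : ℕ} (hm : 1 ≤ m) : B1barEigenvalue ε m = v (m - 1) - m := by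
  rw [← sum_eps_mul_descFactorial hv0 hε1 hεk hm, B1barEigenvalue, ← add_sum_Ioc_eq_sum_Icc hm,
    hε1, Nat.descFactorial_one, one_mul, add_sub_cancel_left]
  rfl

end Epsilon

section ThreeTermRecurrence

variable {K : Type*} [Field K] {b : ℕ → K} {ψ : ℕ → K[X]} (hψ0 : ψ 0 = 1)
  (hψ1 : ψ 1 = C (1 / b 0) * X)
  (hψ : ∀ n : ℕ, 1 ≤ n → C (b n) * ψ (n + 1) = X * ψ n - C (b (n - 1)) * ψ (n - 1))

include hψ in
theorem psi_rec (n : ℕ) : C (b (n + 1)) * ψ (n + 2) = X * ψ (n + 1) - C (b n) * ψ n :=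
  hψ (n + 1) n.succ_pos

include hψ in
theorem b_succ_ne_zero_and_degree_psi_add_two {n : ℕ} (h0 : (ψ n).degree = n)
    (h1 : (ψ (n + 1)).degree = ↑(n + 1)) : b (n + 1) ≠ 0 ∧ (ψ (n + 2)).degree = ↑(n + 2) := by
  have hX : (X * ψ (n + 1)).degree = ↑(n + 2) := by
    rw [mul_comm, degree_mul_X, h1]; norm_cast
  have hlt : (C (b n) * ψ n).degree < (X * ψ (n + 1)).degree := by
    rw [hX, ← smul_eq_C_mul]
    exact (degree_smul_le _ _).trans_lt (by rw [h0]; exact_mod_cast (by omega : n < n + 2))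
  have hdeg := degree_sub_eq_left_of_degree_lt hlt
  rw [← psi_rec hψ, hX] at hdeg
  have hb : b (n + 1) ≠ 0 := by
    rintro hb; rw [hb, C_0, zero_mul, degree_zero] at hdeg; exact WithBot.bot_ne_coe hdeg
  exact ⟨hb, by rwa [degree_C_mul hb] at hdeg⟩

include hψ0 hψ1 hψ in
theorem degree_psi (hb0 : b 0 ≠ 0) (n : ℕ) : (ψ n).degree = n := by
  suffices ∀ n, (ψ n).degree = n ∧ (ψ (n + 1)).degree = ↑(n + 1) from (this n).1
  intro n
  induction n with
  | zero => exact ⟨by simp [hψ0], by rw [hψ1, degree_C_mul_X (by simpa using hb0)]; rfl⟩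
  | succ n ih => exact ⟨ih.2, (b_succ_ne_zero_and_degree_psi_add_two hψ ih.1 ih.2).2⟩

include hψ0 hψ1 hψ in
theorem b_ne_zero (hb0 : b 0 ≠ 0) (n : ℕ) : b n ≠ 0 := by
  cases n with
  | zero => exact hb0
  | succ n => exact (b_succ_ne_zero_and_degree_psi_add_two hψ (degree_psi hψ0 hψ1 hψ hb0 n)
      (degree_psi hψ0 hψ1 hψ hb0 (n + 1))).1

include hψ0 hψ1 hψ in
theorem coeff_psi_eq_zero_of_mod_two_ne (hb0 : b 0 ≠ 0) (n m : ℕ) (h : m % 2 ≠ n % 2) :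
    (ψ n).coeff m = 0 := by
  induction n using Nat.strong_induction_on generalizing m with
  | _ n ih =>
    match n with
    | 0 => rw [hψ0, coeff_one, if_neg (by omega)]
    | 1 => rw [hψ1, coeff_C_mul_X, if_neg (by omega)]
    | n + 2 =>
      have hc := congrArg (coeff · m) (psi_rec hψ n)
      simp only [coeff_C_mul, coeff_sub, ih n (by omega) m (by omega), mul_zero, sub_zero] at hc
      have hX : (X * ψ (n + 1)).coeff m = 0 := by
        cases m with
        | zero => exact coeff_X_mul_zero _
        | succ m => rw [coeff_X_mul, ih (n + 1) (by omega) m (by omega)]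
      rw [hX] at hc
      exact (mul_eq_zero.mp hc).resolve_left (b_ne_zero hψ0 hψ1 hψ hb0 (n + 1))

include hψ0 hψ1 in
theorem X_mul_psi_zero (hb0 : b 0 ≠ 0) : X * ψ 0 = C (b 0) * ψ 1 := by
  rw [hψ0, hψ1, mul_one, ← mul_assoc, ← C_mul, mul_one_div_cancel hb0, C_1, one_mul]

include hψ in
theorem X_mul_psi_succ (n : ℕ) : X * ψ (n + 1) = C (b (n + 1)) * ψ (n + 2) + C (b n) * ψ n := by
  rw [psi_rec hψ]; ring

include hψ in
theorem X_mul_derivative_psi_rec (n : ℕ) :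
    C (b (n + 1)) * (X * derivative (ψ (n + 2)) - (↑(n + 2) : K[X]) * ψ (n + 2)) =
      X * (X * derivative (ψ (n + 1)) - (↑(n + 1) : K[X]) * ψ (n + 1))
        - C (b n) * (X * derivative (ψ n) - (↑n : K[X]) * ψ n) + C (2 * b n) * ψ n := by
  have h := congrArg (X * derivative ·) (psi_rec hψ n)
  simp only [derivative_sub, derivative_mul, derivative_C, derivative_X, zero_mul, zero_add,
    one_mul] at h
  rw [C_mul, map_ofNat]
  push_cast
  linear_combination h - ((n : K[X]) + 2) * psi_rec hψ n

include hψ0 hψ1 hψ in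
theorem X_mul_derivative_psi (hb0 : b 0 ≠ 0) (hb : ∀ n, b (n + 2) ^ 2 = b n ^ 2 + b 1 ^ 2)
    (n : ℕ) : X * derivative (ψ (n + 2)) =
      (↑(n + 2) : K[X]) * ψ (n + 2) + C (2 * b n * b (n + 1) / b 1 ^ 2) * ψ n := by
  have hbne := b_ne_zero hψ0 hψ1 hψ hb0
  have hb1 := hbne 1
  have hΦ0 : X * derivative (ψ 0) - ((0 : ℕ) : K[X]) * ψ 0 = 0 := by simp [hψ0]
  have hΦ1 : X * derivative (ψ 1) - ((1 : ℕ) : K[X]) * ψ 1 = 0 := by simp [hψ1]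
  rw [← sub_eq_iff_eq_add']
  induction n using Nat.strong_induction_on with
  | _ n ih =>
    refine mul_left_cancel₀ (C_ne_zero.mpr (hbne (n + 1))) ?_
    rw [X_mul_derivative_psi_rec hψ]
    match n with
    | 0 =>
      rw [hΦ0, hΦ1, mul_zero, mul_zero, sub_zero, zero_add]
      simp only [← smul_eq_C_mul]
      match_scalars
      field_simp
    | 1 =>
      rw [hΦ1, ih 0 (by omega), mul_left_comm X, X_mul_psi_zero hψ0 hψ1 hb0]
      simp only [← smul_eq_C_mul]
      match_scalars
      have h := hb 0
      simp only [Nat.reduceAdd] at h ⊢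
      field_simp
      linear_combination -2 * h
    | n + 2 =>
      rw [ih n (by omega), ih (n + 1) (by omega), mul_left_comm X, X_mul_psi_succ hψ]
      simp only [← smul_eq_C_mul]
      match_scalars
      · have := hbne (n + 2)
        have h := hb (n + 1)
        simp only [Nat.add_assoc, Nat.reduceAdd] at h ⊢
        field_simp
        linear_combination -2 * h
      · ring

include hψ0 hψ1 hψ in
theorem C_mul_psi_two (hb0 : b 0 ≠ 0) : C (b 0 * b 1) * ψ 2 = X ^ 2 - C (b 0 ^ 2) := by
  have hX := X_mul_psi_zero hψ0 hψ1 hb0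
  have h1 : C (b 1) * ψ 2 = X * ψ 1 - C (b 0) * ψ 0 := psi_rec hψ 0
  rw [hψ0, mul_one] at hX h1
  rw [C_mul, C_pow]
  linear_combination C (b 0) * h1 - X * hX

include hψ0 hψ1 hψ in
theorem C_mul_psi_three (hb0 : b 0 ≠ 0) :
    C (b 0 * b 1 * b 2) * ψ 3 = X ^ 3 - C (b 0 ^ 2 + b 1 ^ 2) * X := by
  have hX := X_mul_psi_zero hψ0 hψ1 hb0
  have h2 : C (b 2) * ψ 3 = X * ψ 2 - C (b 1) * ψ 1 := psi_rec hψ 1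
  have hψ2 := C_mul_psi_two hψ0 hψ1 hψ hb0
  rw [hψ0, mul_one] at hX
  simp only [C_mul, C_add, C_pow] at hψ2 ⊢
  linear_combination C (b 0) * C (b 1) * h2 + X * hψ2 + C (b 1) ^ 2 * hX

include hψ0 hψ1 hψ in
theorem C_mul_psi_four (hb0 : b 0 ≠ 0) :
    C (b 0 * b 1 * b 2 * b 3) * ψ 4 =
      X ^ 4 - C (b 0 ^ 2 + b 1 ^ 2 + b 2 ^ 2) * X ^ 2 + C (b 0 ^ 2 * b 2 ^ 2) := by
  have h3 : C (b 3) * ψ 4 = X * ψ 3 - C (b 2) * ψ 2 := psi_rec hψ 2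
  have hψ2 := C_mul_psi_two hψ0 hψ1 hψ hb0
  have hψ3 := C_mul_psi_three hψ0 hψ1 hψ hb0
  simp only [C_mul, C_add, C_pow] at hψ2 hψ3 ⊢
  linear_combination C (b 0) * C (b 1) * C (b 2) * h3 + X * hψ3 - C (b 2) ^ 2 * hψ2

end ThreeTermRecurrence

section B1barOnPsi

variable {b : ℕ → ℝ} {ψ : ℕ → ℝ[X]} (hψ0 : ψ 0 = 1) (hψ1 : ψ 1 = C (1 / b 0) * X)
  (hψ : ∀ n : ℕ, 1 ≤ n → C (b n) * ψ (n + 1) = X * ψ n - C (b (n - 1)) * ψ (n - 1))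

include hψ0 hψ1 hψ in
theorem B1bar_psi_eq_of_eigenvalue_affine (hb0 : b 0 ≠ 0) {ε α γ : ℕ → ℝ}
    (heig : ∀ m, B1barEigenvalue ε m = α (m % 2) * m + γ (m % 2)) (n : ℕ) :
    B1bar ε (ψ n) = C (α (n % 2)) * (X * derivative (ψ n)) + C (γ (n % 2)) * ψ n := by
  refine B1bar_eq_of_eigenvalue_affine _ _ _ _ fun m hm => ?_
  rw [heig, not_imp_comm.mp (coeff_psi_eq_zero_of_mod_two_ne hψ0 hψ1 hψ hb0 n m) hm]

include hψ0 hψ1 hψ in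
theorem exists_B1bar_psi_eq (hb0 : b 0 ≠ 0) (hb : ∀ n, b (n + 2) ^ 2 = b n ^ 2 + b 1 ^ 2)
    {ε α γ : ℕ → ℝ} (heig : ∀ m, B1barEigenvalue ε m = α (m % 2) * m + γ (m % 2))
    (hγ : γ 0 = 0) :
    ∃ δ β : ℕ → ℝ, B1bar ε (ψ 2) = C (δ 2) * X * ψ 1 ∧
      ∀ n, 3 ≤ n → B1bar ε (ψ n) = C (δ n) * X * ψ (n - 1) + C (β n) * ψ (n - 2) := by
  have hbne := b_ne_zero hψ0 hψ1 hψ hb0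
  set δ : ℕ → ℝ := fun n => (α (n % 2) * n + γ (n % 2)) / b (n - 1)
  set β : ℕ → ℝ := fun n => α (n % 2) * (2 * b (n - 2) * b (n - 1) / b 1 ^ 2) - δ n * b (n - 2)
  have key : ∀ k, B1bar ε (ψ (k + 2)) = C (δ (k + 2)) * X * ψ (k + 1) + C (β (k + 2)) * ψ k := by
    intro k
    rw [B1bar_psi_eq_of_eigenvalue_affine hψ0 hψ1 hψ hb0 heig,
      X_mul_derivative_psi hψ0 hψ1 hψ hb0 hb, mul_assoc (C _) X, X_mul_psi_succ hψ]
    have := hbne (k + 1)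
    simp only [δ, β, ← smul_eq_C_mul, ← nsmul_eq_mul, show k + 2 - 1 = k + 1 from rfl,
      Nat.add_sub_cancel]
    match_scalars
    · field_simp
    · field_simp
      ring
  refine ⟨δ, β, ?_, fun n hn => ?_⟩
  · have hβ2 : β 2 = 0 := by
      simp only [β, δ, hγ]
      field_simp
      ring
    simpa [hβ2] using key 0
  · obtain ⟨k, rfl⟩ := Nat.exists_eq_add_of_le' (by omega : 2 ≤ n)
    exact key k

include hψ0 hψ1 hψ in
theorem B1barEigenvalue_relation_of_B1bar_psi_four (hb0 : b 0 ≠ 0) (ε : ℕ → ℝ) {δ β : ℝ}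
    (h : B1bar ε (ψ 4) = C δ * X * ψ 3 + C β * ψ 2) :
    B1barEigenvalue ε 2 * (b 0 ^ 2 + b 1 ^ 2 + b 2 ^ 2) =
      B1barEigenvalue ε 4 * (b 0 ^ 2 + b 1 ^ 2) := by
  have hψ2 := congrArg coeff (C_mul_psi_two hψ0 hψ1 hψ hb0)
  have hψ3 := congrArg coeff (C_mul_psi_three hψ0 hψ1 hψ hb0)
  have hψ4 := congrArg coeff (C_mul_psi_four hψ0 hψ1 hψ hb0)
  have hB := congrArg coeff h
  have c20 := congrFun hψ2 0
  have c31 := congrFun hψ3 1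
  have c33 := congrFun hψ3 3
  have c42 := congrFun hψ4 2
  have c44 := congrFun hψ4 4
  have e0 := congrFun hB 0
  have e2 := congrFun hB 2
  have e4 := congrFun hB 4
  simp only [coeff_C_mul, coeff_sub, coeff_add, coeff_X_pow, coeff_X, coeff_C]
    at c20 c31 c33 c42 c44
  norm_num at c20 c31 c33 c42 c44
  simp only [coeff_B1bar, coeff_add, coeff_C_mul, mul_assoc, coeff_X_mul, coeff_X_mul_zero] at e0 e2 e4
  have hβ : β = 0 := by
    have hc20 : (ψ 2).coeff 0 ≠ 0 := by
      rintro h0; rw [h0, mul_zero] at c20; exact pow_ne_zero 2 hb0 (neg_eq_zero.mp c20.symm)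
    simpa [B1barEigenvalue, hc20] using e0
  rw [hβ, zero_mul, add_zero] at e2 e4
  -- eliminate `δ` between the coefficients of `x²` and `x⁴`
  set K3 := b 0 * b 1 * b 2
  linear_combination B1barEigenvalue ε 2 * c42 - K3 * b 3 * e2 - b 3 * δ * c31
    + B1barEigenvalue ε 4 * (b 0 ^ 2 + b 1 ^ 2) * c44 - (b 0 ^ 2 + b 1 ^ 2) * K3 * b 3 * e4
    - (b 0 ^ 2 + b 1 ^ 2) * b 3 * δ * c33

end B1barOnPsi

theorem eq_add_mul_of_second_difference_eq_zero {R : Type*} [CommRing R] {w : ℕ → R}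
    (h : ∀ k, w (k + 2) = 2 * w (k + 1) - w k) (k : ℕ) : w k = w 0 + k * (w 1 - w 0) := by
  induction k using Nat.twoStepInduction with
  | zero => simp
  | one => simp
  | more k ih0 ih1 => rw [h, ih0, ih1]; push_cast; ring

theorem vext_natCast (v : ℕ → ℝ) (n : ℕ) : vext v n = v n := by
  simp [vext]

theorem v_add_four_of_compat {v : ℕ → ℝ}
    (hcompat : ∀ n p : ℤ, 2 ≤ n → 1 ≤ p → 2 * p ≤ n →
      vext v (n - 2) * vext v (2 * p - 1) + vext v (2 * p - 3) * vext v (n - 2 * p) =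
        vext v n * vext v (2 * p - 3) + vext v (2 * p - 1) * vext v (n - 2 * p))
    (hv1 : v 1 ≠ 0) (h3 : v 3 = 2 * v 1) (n : ℕ) : v (n + 4) = 2 * v (n + 2) - v n := by
  have h := hcompat ((n + 4 : ℕ) : ℤ) 2 (by omega) (by norm_num) (by omega)
  rw [show ((n + 4 : ℕ) : ℤ) - 2 = ((n + 2 : ℕ) : ℤ) by push_cast; ring,
    show (2 : ℤ) * 2 - 1 = ((3 : ℕ) : ℤ) by norm_num, show (2 : ℤ) * 2 - 3 = ((1 : ℕ) : ℤ) by norm_num,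
    show ((n + 4 : ℕ) : ℤ) - 2 * 2 = (n : ℤ) by push_cast; ring] at h
  simp only [vext_natCast, h3] at h
  exact mul_left_cancel₀ hv1 (by linear_combination -h)

theorem v_odd_of_rec {v : ℕ → ℝ} (hrec : ∀ n, v (n + 4) = 2 * v (n + 2) - v n)
    (h3 : v 3 = 2 * v 1) (p : ℕ) : v (2 * p + 1) = (p + 1) * v 1 := by
  have h := eq_add_mul_of_second_difference_eq_zero (w := fun k => v (2 * k + 1))
    (fun k => hrec (2 * k + 1)) p
  rw [h]
  simp only [mul_zero, zero_add, mul_one, h3]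
  ring

theorem v_even_of_rec {v : ℕ → ℝ} (hv0 : v 0 = 1) (hrec : ∀ n, v (n + 4) = 2 * v (n + 2) - v n)
    (m : ℕ) : v (2 * m) = m * v 2 - (m - 1) := by
  have h := eq_add_mul_of_second_difference_eq_zero (w := fun k => v (2 * k))
    (fun k => hrec (2 * k)) m
  rw [h]
  simp only [mul_zero, mul_one, hv0]
  ring

section SequenceV

variable {v : ℕ → ℝ} (hv0 : v 0 = 1) (hmono : ∀ n : ℕ, v n ≤ v (n + 1)) {b : ℕ → ℝ}
  (hbn : ∀ n : ℕ, 2 ≤ n → b (n - 1) = b 0 * Real.sqrt (v (n - 1) * (v n - v (n - 2)) / v 1))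
  (hodd : ∀ p : ℕ, v (2 * p + 1) = (p + 1) * v 1)
  (heven : ∀ m : ℕ, v (2 * m) = m * v 2 - (m - 1))

include hv0 hmono in
theorem one_le_v (n : ℕ) : 1 ≤ v n :=
  hv0 ▸ monotone_nat_of_le_succ hmono (Nat.zero_le n)

include hv0 hmono hbn in
theorem b_sq (n : ℕ) : b (n + 1) ^ 2 = b 0 ^ 2 * (v (n + 1) * (v (n + 2) - v n) / v 1) := by
  have hv := one_le_v hv0 hmono
  have hnonneg : 0 ≤ v (n + 1) * (v (n + 2) - v n) / v 1 :=
    div_nonneg (mul_nonneg (by linarith [hv (n + 1)]) (by linarith [hmono n, hmono (n + 1)]))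
      (by linarith [hv 1])
  have h := hbn (n + 2) (by omega)
  simp only [Nat.add_sub_cancel, show n + 2 - 1 = n + 1 from rfl] at h
  rw [h, mul_pow, Real.sq_sqrt hnonneg]

include hv0 hmono hbn in
theorem v_three_eq (hb0 : b 0 ≠ 0)
    (h : (v 1 - 2) * (b 0 ^ 2 + b 1 ^ 2 + b 2 ^ 2) = (v 3 - 4) * (b 0 ^ 2 + b 1 ^ 2)) :
    v 3 = 2 * v 1 := by
  have hv := one_le_v hv0 hmono
  have hv1 : v 1 ≠ 0 := by linarith [hv 1]
  have hb1 : b 1 ^ 2 = b 0 ^ 2 * (v 2 - 1) := by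
    rw [b_sq hv0 hmono hbn 0, hv0]; field_simp
  have hb2 : b 2 ^ 2 * v 1 = b 0 ^ 2 * v 2 * (v 3 - v 1) := by
    rw [b_sq hv0 hmono hbn 1]; field_simp
  have key : b 0 ^ 2 * v 2 * (4 * v 1 - 2 * v 3) = 0 := by
    linear_combination v 1 * h - (v 1 * (v 1 - 2) - v 1 * (v 3 - 4)) * hb1 - (v 1 - 2) * hb2
  have hb0v2 : b 0 ^ 2 * v 2 ≠ 0 := mul_ne_zero (pow_ne_zero 2 hb0) (by linarith [hv 2])
  linarith [(mul_eq_zero.mp key).resolve_left hb0v2]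

include hv0 hmono hbn hodd heven in
theorem b_sq_add_b_one_sq (n : ℕ) : b (n + 2) ^ 2 = b n ^ 2 + b 1 ^ 2 := by
  have hv1 : v 1 ≠ 0 := by linarith [one_le_v hv0 hmono 1]
  have hsq := b_sq hv0 hmono hbn
  have heven_sq : ∀ j, b (2 * j) ^ 2 = b 0 ^ 2 * v (2 * j) := by
    rintro (_ | j)
    · simp [hv0]
    · rw [show 2 * (j + 1) = 2 * j + 1 + 1 by ring, hsq, show 2 * j + 1 + 2 = 2 * (j + 1) + 1 by ring,
        hodd, hodd]
      push_cast
      field_simp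
      ring
  have hodd_sq : ∀ j : ℕ, b (2 * j + 1) ^ 2 = b 0 ^ 2 * (j + 1) * (v 2 - 1) := by
    intro j
    rw [hsq, show 2 * j + 2 = 2 * (j + 1) by ring, hodd, heven, heven]
    push_cast
    field_simp
    ring
  obtain ⟨j, rfl | rfl⟩ := Nat.even_or_odd' n
  · rw [show 2 * j + 2 = 2 * (j + 1) by ring, heven_sq, heven_sq, heven, heven,
      show 1 = 2 * 0 + 1 by rfl, hodd_sq]
    push_cast
    ring
  · rw [show 2 * j + 1 + 2 = 2 * (j + 1) + 1 by ring, hodd_sq, hodd_sq,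
      show 1 = 2 * 0 + 1 by rfl, hodd_sq]
    push_cast
    ring

include hv0 hodd heven in
theorem B1barEigenvalue_eq_affine {ε : ℕ → ℝ} (hε1 : ε 1 = 1)
    (hεk : ∀ k : ℕ, 2 ≤ k →
      ε k = v (k - 1) / (Nat.factorial k : ℝ)
        - ∑ j ∈ Finset.Icc 1 (k - 1), ε j / (Nat.factorial (k - j) : ℝ)) (m : ℕ) :
    B1barEigenvalue ε m =
      (if m % 2 = 0 then (v 1 - 2) / 2 else (v 2 - 3) / 2) * m +
        (if m % 2 = 0 then 0 else -((v 2 - 3) / 2)) := by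
  obtain ⟨j, rfl | rfl⟩ := Nat.even_or_odd' m
  · rcases j with _ | j
    · simp [B1barEigenvalue]
    · rw [B1barEigenvalue_eq hv0 hε1 hεk (by omega), show 2 * (j + 1) - 1 = 2 * j + 1 by omega,
        hodd]
      simp only [Nat.cast_mul, Nat.cast_ofNat, Nat.cast_add, Nat.cast_one, Nat.mul_mod_right,
        ↓reduceIte, add_zero]
      ring
  · rw [B1barEigenvalue_eq hv0 hε1 hεk (by omega), Nat.add_sub_cancel, heven]
    simp only [Nat.cast_add, Nat.cast_mul, Nat.cast_ofNat, Nat.cast_one, Nat.add_mod,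
      Nat.mul_mod_right, Nat.mod_succ, zero_add, one_ne_zero, ↓reduceIte]
    ring

end SequenceV

theorem stmt_1 (v : ℕ → ℝ) (hv0 : v 0 = 1) (hmono : ∀ n : ℕ, v n ≤ v (n + 1))
    (hcompat : ∀ n p : ℤ, 2 ≤ n → 1 ≤ p → 2 * p ≤ n →
      vext v (n - 2) * vext v (2 * p - 1) + vext v (2 * p - 3) * vext v (n - 2 * p) =
        vext v n * vext v (2 * p - 3) + vext v (2 * p - 1) * vext v (n - 2 * p))
    (ε : ℕ → ℝ) (hε1 : ε 1 = 1)
    (hεk : ∀ k : ℕ, 2 ≤ k →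
      ε k = v (k - 1) / (Nat.factorial k : ℝ)
        - ∑ j ∈ Finset.Icc 1 (k - 1), ε j / (Nat.factorial (k - j) : ℝ))
    (b : ℕ → ℝ) (hb0 : 0 < b 0)
    (hbn : ∀ n : ℕ, 2 ≤ n →
      b (n - 1) = b 0 * Real.sqrt (v (n - 1) * (v n - v (n - 2)) / v 1))
    (ψ : ℕ → Polynomial ℝ) (hψ0 : ψ 0 = 1) (hψ1 : ψ 1 = C (1 / b 0) * X)
    (hψ : ∀ n : ℕ, 1 ≤ n →
      C (b n) * ψ (n + 1) = X * ψ n - C (b (n - 1)) * ψ (n - 1)) :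
    (∃ δ β : ℕ → ℝ,
        B1bar ε (ψ 2) = C (δ 2) * X * ψ 1 ∧
        ∀ n : ℕ, 3 ≤ n →
          B1bar ε (ψ n) = C (δ n) * X * ψ (n - 1) + C (β n) * ψ (n - 2)) ↔
      ((∀ p : ℕ, 1 ≤ p → v (2 * p + 1) = ((p : ℝ) + 1) * v 1) ∧
       (∀ m : ℕ, 2 ≤ m → v (2 * m) = (m : ℝ) * v 2 - ((m : ℝ) - 1))) := by
  have hv1 : v 1 ≠ 0 := by linarith [one_le_v hv0 hmono 1]
  constructor
  · rintro ⟨δ, β, -, h⟩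
    have hrel := B1barEigenvalue_relation_of_B1bar_psi_four hψ0 hψ1 hψ hb0.ne' ε (h 4 (by norm_num))
    rw [B1barEigenvalue_eq hv0 hε1 hεk (by norm_num),
      B1barEigenvalue_eq hv0 hε1 hεk (by norm_num)] at hrel
    norm_num at hrel
    have h3 : v 3 = 2 * v 1 := v_three_eq hv0 hmono hbn hb0.ne' hrel
    have hrec := v_add_four_of_compat hcompat hv1 h3
    exact ⟨fun p _ => v_odd_of_rec hrec h3 p, fun m _ => v_even_of_rec hv0 hrec m⟩
  · rintro ⟨hodd, heven⟩
    have hodd' : ∀ p : ℕ, v (2 * p + 1) = (p + 1) * v 1 := by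
      rintro (_ | p)
      · simp
      · exact hodd _ (by omega)
    have heven' : ∀ m : ℕ, v (2 * m) = m * v 2 - (m - 1) := by
      rintro (_ | _ | m)
      · simp [hv0]
      · simp
      · exact heven _ (by omega)
    exact exists_B1bar_psi_eq hψ0 hψ1 hψ hb0.ne' (b_sq_add_b_one_sq hv0 hmono hbn hodd' heven')
      (α := fun r => if r = 0 then (v 1 - 2) / 2 else (v 2 - 3) / 2)
      (γ := fun r => if r = 0 then 0 else -((v 2 - 3) / 2))
      (B1barEigenvalue_eq_affine hv0 hodd' heven' hε1 hεk) rfl
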